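/- arXiv:1605.09575 — 3 statements merged into one kernel-verified Lean document; each statement's English description precedes it below -/
import Mathlib

section
/- Let k ≥ 1 and let α_k ≥ α_{k−1} ≥ ⋯ ≥ α_1 ≥ 1 be integers, and let P be the very even partition of 2n with parts 2α_k, 2α_k, 2α_{k−1}, 2α_{k−1}, …, 2α_1, 2α_1. Then the multiset of the n largest elements of H(P) equals ⊎_{l=1}^{k} {2α_l−1, 2α_l−1, 2α_l−3, 2α_l−3, …, 3, 3, 1, 1} = ⊎_{l=1}^{k} K_{2α_l}. (This is the very even case of Theorem C for G = SO(2n,ℂ): the Dynkin element h^∨ of the very even dual orbit with this partition coincides, up to the sign of its last coordinate which distinguishes the two very even orbits O_I and O_{II}, with the maximal term Ψ(O_I, triv) of R(O_I), proving the Achar–Sommers conjecture for very even orbits.) -/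
/-- The multiset `K_j`: each of `j-1, j-3, …` down to `2` (if `j` is odd) or `1` (if `j`
is even) with multiplicity 2, together with a single `0` when `j` is odd.  In particular
`K_{2α} = {2α-1, 2α-1, 2α-3, 2α-3, …, 3, 3, 1, 1}`. -/
def Kmult (j : ℕ) : Multiset ℕ :=
  if Even j then 2 • (((List.range (j / 2)).map (fun i => 2 * i + 1) : List ℕ) : Multiset ℕ)
  else 2 • (((List.range (j / 2)).map (fun i => 2 * i + 2) : List ℕ) : Multiset ℕ) + {0}

/-- The arithmetic string `{r-1, r-3, …, 3-r, 1-r}` attached to a part `r`. -/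
def hString (r : ℕ) : Multiset ℤ :=
  (((List.range r).map (fun t => (r : ℤ) - 1 - 2 * t) : List ℤ) : Multiset ℤ)

/-- `H(P)`: the multiset union over the parts `r` of `P` of the strings `{r-1, …, 1-r}`. -/
def HofP (P : Multiset ℕ) : Multiset ℤ := P.bind hString

/-- The multiset of the `n` largest elements of `M`. -/
def topN (M : Multiset ℤ) (n : ℕ) : Multiset ℤ :=
  (((M.sort (· ≤ ·)).reverse.take n : List ℤ) : Multiset ℤ)

/-! ### Auxiliary machinery -/

/-- The positive half `{1, 3, …, 2a-1}` of the string of the part `2a`. -/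
def posHalf (a : ℕ) : Multiset ℤ :=
  (((List.range a).map (fun i : ℕ => (2 * (i : ℤ) + 1)) : List ℤ) : Multiset ℤ)

/-- The negative half `{-1, -3, …, -(2a-1)}` of the string of the part `2a`. -/
def negHalf (a : ℕ) : Multiset ℤ :=
  (((List.range a).map (fun i : ℕ => (-(2 * (i : ℤ) + 1))) : List ℤ) : Multiset ℤ)

lemma multiset_exists_max {s : Multiset ℤ} (h : s ≠ 0) : ∃ m ∈ s, ∀ x ∈ s, x ≤ m := by
  induction s using Multiset.induction with
  | empty => simp at h
  | cons a s ih =>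
    by_cases hs : s = 0
    · subst hs
      exact ⟨a, by simp⟩
    · obtain ⟨m, hm, hmax⟩ := ih hs
      rcases le_total a m with h' | h'
      · refine ⟨m, Multiset.mem_cons_of_mem hm, fun x hx => ?_⟩
        rcases Multiset.mem_cons.1 hx with rfl | hx
        exacts [h', hmax x hx]
      · refine ⟨a, Multiset.mem_cons_self _ _, fun x hx => ?_⟩
        rcases Multiset.mem_cons.1 hx with rfl | hx
        exacts [le_rfl, (hmax x hx).trans h']

/-- Key combinatorial lemma: if `X + Y = A + B`, every element of `A` is `≤` every element
of `B`, every element of `Y` is `≤` every element of `X`, and `X` and `B` have the same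
cardinality, then `X = B`. -/
lemma key_top (n : ℕ) : ∀ (X Y A B : Multiset ℤ), Multiset.card X = n → Multiset.card B = n →
    X + Y = A + B → (∀ a ∈ A, ∀ b ∈ B, a ≤ b) → (∀ y ∈ Y, ∀ x ∈ X, y ≤ x) → X = B := by
  induction n with
  | zero =>
    intro X Y A B hX hB _ _ _
    rw [Multiset.card_eq_zero] at hX hB
    rw [hX, hB]
  | succ n ih =>
    intro X Y A B hX hB hXY hAB hYX
    have hXne : X ≠ 0 := by intro h; rw [h] at hX; simp at hX
    have hBne : B ≠ 0 := by intro h; rw [h] at hB; simp at hB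
    obtain ⟨m, hmX, hmax⟩ := multiset_exists_max hXne
    have hmaxAB : ∀ e ∈ A + B, e ≤ m := by
      intro e he
      rw [← hXY] at he
      rcases Multiset.mem_add.1 he with h | h
      · exact hmax e h
      · exact hYX e h m hmX
    obtain ⟨b, hbB, _⟩ := multiset_exists_max hBne
    have hmB : m ∈ B := by
      have hmAB : m ∈ A + B := by rw [← hXY]; exact Multiset.mem_add.2 (Or.inl hmX)
      rcases Multiset.mem_add.1 hmAB with h | h
      · have h1 : m ≤ b := hAB m h b hbB
        have h2 : b ≤ m := hmaxAB b (Multiset.mem_add.2 (Or.inr hbB))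
        have : m = b := le_antisymm h1 h2
        rw [this]; exact hbB
      · exact h
    have hXY' : X.erase m + Y = A + B.erase m := by
      have h := congrArg (fun s => Multiset.erase s m) hXY
      rwa [Multiset.erase_add_left_pos _ hmX, Multiset.erase_add_right_pos _ hmB] at h
    have hrec := ih (X.erase m) Y A (B.erase m)
      (by rw [Multiset.card_erase_of_mem hmX, hX]; rfl)
      (by rw [Multiset.card_erase_of_mem hmB, hB]; rfl)
      hXY'
      (fun a ha b hb => hAB a ha b (Multiset.mem_of_mem_erase hb))
      (fun y hy x hx => hYX y hy x (Multiset.mem_of_mem_erase hx))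
    calc X = m ::ₘ X.erase m := (Multiset.cons_erase hmX).symm
    _ = m ::ₘ B.erase m := by rw [hrec]
    _ = B := Multiset.cons_erase hmB

/-- If `M = A + B` with every element of `A` `≤` every element of `B`, then the
`card B` largest elements of `M` form exactly `B`. -/
lemma topN_eq {M A B : Multiset ℤ} (hM : M = A + B) (hAB : ∀ a ∈ A, ∀ b ∈ B, a ≤ b) :
    topN M (Multiset.card B) = B := by
  set n := Multiset.card B with hn
  set L := M.sort (· ≤ ·) with hL
  have hsort : L.Pairwise (· ≤ ·) := Multiset.pairwise_sort _ _
  have hLM : (L : Multiset ℤ) = M := Multiset.sort_eq _ _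
  have hlen : L.length = Multiset.card A + n := by
    rw [← Multiset.coe_card, hLM, hM, Multiset.card_add]
  unfold topN
  rw [← hL, List.take_reverse, Multiset.coe_reverse]
  apply key_top n (↑(L.drop (L.length - n))) (↑(L.take (L.length - n))) A B
  · rw [Multiset.coe_card, List.length_drop]; omega
  · rfl
  · calc (↑(L.drop (L.length - n)) : Multiset ℤ) + ↑(L.take (L.length - n))
        = (↑(L.take (L.length - n)) : Multiset ℤ) + ↑(L.drop (L.length - n)) := add_comm _ _
    _ = (↑L : Multiset ℤ) := by rw [Multiset.coe_add, List.take_append_drop]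
    _ = A + B := by rw [hLM, hM]
  · exact hAB
  · intro y hy x hx
    exact hsort.rel_of_mem_take_of_mem_drop (Multiset.mem_coe.1 hy) (Multiset.mem_coe.1 hx)

lemma hString_eq (r : ℕ) : hString r
    = (((List.range r).map (fun t : ℕ => (r : ℤ) - 1 - 2 * (t : ℤ)) : List ℤ) : Multiset ℤ) := by
  unfold hString
  congr 1
  simp only [List.bind_eq_flatMap, List.pure_def, ← List.map_eq_flatMap, List.map_map]
  rfl

lemma hString_step (r : ℕ) :
    hString (r + 2) = ((r : ℤ) + 1) ::ₘ (-((r : ℤ) + 1)) ::ₘ hString r := by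
  have h1 : List.range (r + 2) = 0 :: ((List.range r).map Nat.succ ++ [Nat.succ r]) := by
    rw [show r + 2 = (r + 1) + 1 from rfl, List.range_succ_eq_map, List.range_succ,
      List.map_append, List.map_cons, List.map_nil]
  rw [hString_eq, hString_eq]
  rw [h1, List.map_cons, List.map_append, List.map_map, List.map_cons, List.map_nil]
  have h2 : (List.range r).map ((fun t : ℕ => ((r + 2 : ℕ) : ℤ) - 1 - 2 * (t : ℤ)) ∘ Nat.succ)
      = (List.range r).map (fun t : ℕ => (r : ℤ) - 1 - 2 * (t : ℤ)) := by
    apply List.map_congr_left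
    intro t _
    simp only [Function.comp_apply]
    push_cast
    ring
  rw [h2]
  have h3 : ((r + 2 : ℕ) : ℤ) - 1 - 2 * ((0 : ℕ) : ℤ) = (r : ℤ) + 1 := by push_cast; ring
  have h4 : ((r + 2 : ℕ) : ℤ) - 1 - 2 * ((Nat.succ r : ℕ) : ℤ) = -((r : ℤ) + 1) := by
    push_cast; ring
  rw [h3, h4, ← Multiset.cons_coe, ← Multiset.coe_add, Multiset.coe_singleton]
  congr 1
  rw [add_comm, Multiset.singleton_add]

lemma posHalf_succ (a : ℕ) : posHalf (a + 1) = (2 * (a : ℤ) + 1) ::ₘ posHalf a := by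
  unfold posHalf
  rw [List.range_succ, List.map_append, List.map_cons, List.map_nil, ← Multiset.coe_add,
    Multiset.coe_singleton, add_comm, Multiset.singleton_add]

lemma negHalf_succ (a : ℕ) : negHalf (a + 1) = (-(2 * (a : ℤ) + 1)) ::ₘ negHalf a := by
  unfold negHalf
  rw [List.range_succ, List.map_append, List.map_cons, List.map_nil, ← Multiset.coe_add,
    Multiset.coe_singleton, add_comm, Multiset.singleton_add]

lemma hString_split (a : ℕ) : hString (2 * a) = negHalf a + posHalf a := by
  induction a with
  | zero => simp [hString_eq, posHalf, negHalf]
  | succ a ih =>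
    rw [show 2 * (a + 1) = 2 * a + 2 from by ring, hString_step, ih, posHalf_succ, negHalf_succ]
    have hc : ((2 * a : ℕ) : ℤ) + 1 = 2 * (a : ℤ) + 1 := by push_cast; ring
    rw [hc]
    simp only [← Multiset.singleton_add]
    abel

lemma Kmult_map_cast (a : ℕ) :
    (Kmult (2 * a)).map (fun z : ℕ => (z : ℤ)) = posHalf a + posHalf a := by
  unfold Kmult
  rw [if_pos (even_two_mul a), Nat.mul_div_cancel_left a (by norm_num : 0 < 2)]
  rw [two_nsmul, Multiset.map_add, Multiset.map_coe, List.map_map]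
  have hfun : ((fun z : ℕ => (z : ℤ)) ∘ fun i : ℕ => 2 * i + 1)
      = fun i : ℕ => 2 * (i : ℤ) + 1 := by
    funext i
    simp only [Function.comp_apply]
    push_cast
    ring
  rw [hfun]
  rfl

/-- Achar–Sommers conjecture, very even case: for `k ≥ 1` and integers
`α_k ≥ α_{k-1} ≥ ⋯ ≥ α_1 ≥ 1`, let `P` be the very even partition of `2n` with parts
`2α_k, 2α_k, …, 2α_1, 2α_1`.  Then the `n` largest elements of `H(P)` form the multiset
`⊎_{l=1}^{k} {2α_l-1, 2α_l-1, …, 3, 3, 1, 1} = ⊎_{l=1}^{k} K_{2α_l}`. -/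
theorem acharSommers_veryEven (k : ℕ) (hk : 1 ≤ k) (α : ℕ → ℕ)
    (hmono : ∀ l, 1 ≤ l → l < k → α l ≤ α (l + 1))
    (hα1 : 1 ≤ α 1)
    (P : Multiset ℕ)
    (hP : P = (Finset.Icc 1 k).val.bind (fun l => ({2 * α l, 2 * α l} : Multiset ℕ))) :
    topN (HofP P) (P.sum / 2)
      = ((Finset.Icc 1 k).val.bind (fun l => Kmult (2 * α l))).map (fun z => (z : ℤ)) := by
  subst hP
  set S := (Finset.Icc 1 k).val with hS
  set A : Multiset ℤ := S.bind (fun l => negHalf (α l) + negHalf (α l)) with hA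
  set B : Multiset ℤ := S.bind (fun l => posHalf (α l) + posHalf (α l)) with hB
  -- the string multiset decomposes as A + B
  have hH : HofP (S.bind fun l => ({2 * α l, 2 * α l} : Multiset ℕ)) = A + B := by
    unfold HofP
    rw [Multiset.bind_assoc, hA, hB, ← Multiset.bind_add]
    apply Multiset.bind_congr
    intro l _
    rw [show ({2 * α l, 2 * α l} : Multiset ℕ) = (2 * α l) ::ₘ {2 * α l} from rfl,
      Multiset.cons_bind, Multiset.singleton_bind, hString_split]
    abel
  -- B is the right-hand side
  have hBr : B = Multiset.map (fun z : ℕ => (z : ℤ)) (S.bind fun l => Kmult (2 * α l)) := by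
    rw [hB, Multiset.map_bind]
    apply Multiset.bind_congr
    intro l _
    exact (Kmult_map_cast (α l)).symm
  -- cardinality computation
  have hcard : (S.bind fun l => ({2 * α l, 2 * α l} : Multiset ℕ)).sum
      = 2 * Multiset.card B := by
    have h1 : Multiset.map (fun l => ({2 * α l, 2 * α l} : Multiset ℕ).sum) S
        = Multiset.map (fun l => 2 * (α l + α l)) S := by
      apply Multiset.map_congr rfl
      intro l _
      simp only [Multiset.insert_eq_cons, Multiset.sum_cons, Multiset.sum_singleton]
      ring
    have h2 : Multiset.map (Multiset.card ∘ fun l => posHalf (α l) + posHalf (α l)) S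
        = Multiset.map (fun l => α l + α l) S := by
      apply Multiset.map_congr rfl
      intro l _
      simp [posHalf]
    rw [hB, Multiset.card_bind, Multiset.sum_bind, h1, h2, Multiset.sum_map_mul_left]
  have hn : (S.bind fun l => ({2 * α l, 2 * α l} : Multiset ℕ)).sum / 2 = Multiset.card B := by
    omega
  rw [hn]
  have hclean : ((S.bind fun l => Kmult (2 * α l)).map (fun z => (z : ℤ)))
      = Multiset.map (fun z : ℕ => (z : ℤ)) (S.bind fun l => Kmult (2 * α l)) := by
    simp
  rw [hclean, ← hBr]
  apply topN_eq hH
  intro a ha b hb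
  have haneg : a ≤ 0 := by
    rw [hA] at ha
    simp only [Multiset.mem_bind, Multiset.mem_add, negHalf, Multiset.mem_coe,
      List.mem_map] at ha
    obtain ⟨l, -, h | h⟩ := ha <;> obtain ⟨i, -, rfl⟩ := h <;> omega
  have hbpos : 0 ≤ b := by
    rw [hB] at hb
    simp only [Multiset.mem_bind, Multiset.mem_add, posHalf, Multiset.mem_coe,
      List.mem_map] at hb
    obtain ⟨l, -, h | h⟩ := hb <;> obtain ⟨i, -, rfl⟩ := h <;> omega
  exact haneg.trans hbpos
end

section
/- Let q ≥ 0, let a_{2q} ≥ a_{2q−1} ≥ ⋯ ≥ a_1 ≥ 2 be even integers, let a_0 be an even integer with a_1 ≥ a_0 ≥ 0, let I ⊆ {1,…,q}, and let μ_1,…,μ_x and ν_1,…,ν_y be positive integers. Consider the multiset M := {a_{2i}, a_{2i−1} : i ∈ I} ⊎ {a_{2j}+1, a_{2j−1}−1 : j ∈ {1,…,q}∖I} ⊎ {a_0+1} ⊎ {μ_u, μ_u : 1 ≤ u ≤ x} ⊎ {ν_v, ν_v : 1 ≤ v ≤ y}. Then every even element of M occurs in M with even multiplicity — i.e. M is the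 partition of a nilpotent orbit of so(2n+1,ℂ), where 2n+1 is the sum of the elements of M — if and only if a_{2i} = a_{2i−1} for every i ∈ I. (This is the assertion in Lemma 4.2, type C case, that the displayed candidate partition for Sommers' canonical preimage defines a nilpotent orbit in the Langlands dual Lie algebra so(2n+1,ℂ) precisely when a_{2i} = a_{2i−1} for all i ∈ I.) -/
/-!
Even parts of `M` can only come from the pairs `{a_{2i}, a_{2i-1}}` with `i ∈ I`: the parts
`a_{2j} + 1`, `a_{2j-1} - 1` and `a_0 + 1` are odd, and the `μ_u`, `ν_v` come in pairs. The pairs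
interlace, `a_{2i-1} ≤ a_{2i} ≤ a_{2j-1}` for `i < j`, so if some pair is unequal, the top part
`a_{2m}` of the last unequal pair occurs exactly once in it and in no other unequal pair, hence
an odd number of times overall.
-/

def EvenPartsEvenMult (M : Multiset ℕ) : Prop :=
  ∀ e, Even e → Even (M.count e)

theorem evenPartsEvenMult_iff_forall_mem {M : Multiset ℕ} :
    (∀ e ∈ M, Even e → Even (M.count e)) ↔ EvenPartsEvenMult M := by
  refine ⟨fun h e he => ?_, fun h e _ he => h e he⟩
  by_cases heM : e ∈ M
  · exact h e heM he
  · simp [Multiset.count_eq_zero_of_notMem heM]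

theorem evenPartsEvenMult_add_iff_left {M N : Multiset ℕ} (hN : EvenPartsEvenMult N) :
    EvenPartsEvenMult (M + N) ↔ EvenPartsEvenMult M := by
  refine forall₂_congr fun e he => ?_
  rw [Multiset.count_add, Nat.even_add]
  exact iff_true_right (hN e he)

theorem evenPartsEvenMult_two_nsmul (N : Multiset ℕ) : EvenPartsEvenMult (2 • N) :=
  fun e _ => by simp [Multiset.count_nsmul]

theorem evenPartsEvenMult_of_forall_odd {N : Multiset ℕ} (hN : ∀ x ∈ N, Odd x) :
    EvenPartsEvenMult N := fun e he => by
  simp [Multiset.count_eq_zero_of_notMem fun heN => Nat.not_odd_iff_even.2 he (hN e heN)]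

theorem evenPartsEvenMult_iff_of_forall_even {M : Multiset ℕ} (hM : ∀ x ∈ M, Even x) :
    EvenPartsEvenMult M ↔ ∀ e, Even (M.count e) := by
  refine ⟨fun h e => ?_, fun h e _ => h e⟩
  by_cases heM : e ∈ M
  · exact h e (hM e heM)
  · simp [Multiset.count_eq_zero_of_notMem heM]

theorem forall_mem_bind_pair {ι α : Type*} {I : Finset ι} {f g : ι → α} {P : α → Prop} :
    (∀ x ∈ I.val.bind fun i => ({f i, g i} : Multiset α), P x) ↔
      ∀ i ∈ I, P (f i) ∧ P (g i) := by
  simp only [Multiset.mem_bind, Finset.mem_val, Multiset.insert_eq_cons, Multiset.mem_cons,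
    Multiset.mem_singleton]
  grind

section InterlacingPairs

variable {ι α : Type*} [LinearOrder ι] [LinearOrder α] {I : Finset ι} {b c : ι → α}

theorem even_count_pair_of_eq {x y : α} (hxy : x = y) (e : α) :
    Even (Multiset.count e {x, y}) := by
  subst hxy
  by_cases he : e = x <;> simp [he]

theorem odd_count_bind_pair_of_lt
    (hcb : ∀ i ∈ I, c i ≤ b i) (hinterlace : ∀ i ∈ I, ∀ j ∈ I, i < j → b i ≤ c j)
    {m : ι} (hm : m ∈ I) (hlt : c m < b m) (hlast : ∀ j ∈ I, m < j → b j = c j) :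
    Odd ((I.val.bind fun i => ({b i, c i} : Multiset α)).count (b m)) := by
  have hother : ∀ j ∈ I.erase m, Even (Multiset.count (b m) {b j, c j}) := by
    intro j hj
    obtain ⟨hjm, hjI⟩ := Finset.mem_erase.1 hj
    rcases hjm.lt_or_gt with hjm | hmj
    · have hbj : b j < b m := (hinterlace j hjI m hm hjm).trans_lt hlt
      have hcj : c j < b m := (hcb j hjI).trans_lt hbj
      simp [hbj.ne', hcj.ne']
    · exact even_count_pair_of_eq (hlast j hjI hmj) _
  rw [Multiset.count_bind, ← Finset.sum_eq_multiset_sum, ← Finset.add_sum_erase I _ hm]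
  have hm_once : Multiset.count (b m) {b m, c m} = 1 := by simp [hlt.ne']
  rw [hm_once]
  exact (Finset.even_sum _ hother).one_add

theorem forall_even_count_bind_pair_iff
    (hcb : ∀ i ∈ I, c i ≤ b i)
    (hinterlace : ∀ i ∈ I, ∀ j ∈ I, i < j → b i ≤ c j) :
    (∀ e, Even ((I.val.bind fun i => ({b i, c i} : Multiset α)).count e)) ↔
      ∀ i ∈ I, b i = c i := by
  constructor
  · intro h
    by_contra! hne
    set S := I.filter fun i => c i < b i
    have hS : S.Nonempty := by
      obtain ⟨i, hi, hbc⟩ := hne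
      exact ⟨i, Finset.mem_filter.2 ⟨hi, (hcb i hi).lt_of_ne' hbc⟩⟩
    obtain ⟨hm, hlt⟩ := Finset.mem_filter.1 (S.max'_mem hS)
    refine Nat.not_even_iff_odd.2 (odd_count_bind_pair_of_lt hcb hinterlace hm hlt ?_) (h _)
    intro j hj hmj
    by_contra hbc
    exact (S.le_max' j (Finset.mem_filter.2 ⟨hj, (hcb j hj).lt_of_ne' hbc⟩)).not_gt hmj
  · intro h e
    rw [Multiset.count_bind, ← Finset.sum_eq_multiset_sum]
    exact Finset.even_sum _ fun i hi => even_count_pair_of_eq (h i hi) e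

end InterlacingPairs

theorem canonicalPreimage_typeC_partition_iff_general (q : ℕ) (a : ℕ → ℕ) (I : Finset ℕ)
    (μ ν : List ℕ)
    (ha_even : ∀ i, i ≤ 2 * q → Even (a i))
    (ha_mono : ∀ i, i < 2 * q → a i ≤ a (i + 1))
    (ha_ge : ∀ i, 1 ≤ i → i ≤ 2 * q → 2 ≤ a i)
    (hI : I ⊆ Finset.Icc 1 q)
    (M : Multiset ℕ)
    (hM : M = I.val.bind (fun i => ({a (2 * i), a (2 * i - 1)} : Multiset ℕ))
        + ((Finset.Icc 1 q) \ I).val.bind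
            (fun j => ({a (2 * j) + 1, a (2 * j - 1) - 1} : Multiset ℕ))
        + ({a 0 + 1} : Multiset ℕ)
        + 2 • (μ : Multiset ℕ) + 2 • (ν : Multiset ℕ)) :
    (∀ e ∈ M, Even e → Even (M.count e)) ↔ (∀ i ∈ I, a (2 * i) = a (2 * i - 1)) := by
  have hmono : MonotoneOn a (Set.Iic (2 * q)) :=
    monotoneOn_of_le_add_one Set.ordConnected_Iic fun i _ _ hi => ha_mono i hi
  have hodd : ∀ j ∈ (Finset.Icc 1 q) \ I, Odd (a (2 * j) + 1) ∧ Odd (a (2 * j - 1) - 1) := by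
    intro j hj
    obtain ⟨hj1, hjq⟩ := Finset.mem_Icc.1 (Finset.mem_sdiff.1 hj).1
    have hpos : 1 ≤ a (2 * j - 1) := one_le_two.trans (ha_ge _ (by omega) (by omega))
    exact ⟨(ha_even _ (by omega)).add_one, Nat.Even.sub_odd hpos (ha_even _ (by omega)) odd_one⟩
  rw [evenPartsEvenMult_iff_forall_mem, hM,
    evenPartsEvenMult_add_iff_left (evenPartsEvenMult_two_nsmul _),
    evenPartsEvenMult_add_iff_left (evenPartsEvenMult_two_nsmul _),
    evenPartsEvenMult_add_iff_left (evenPartsEvenMult_of_forall_odd (by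
      simpa using (ha_even 0 (Nat.zero_le _)).add_one)),
    evenPartsEvenMult_add_iff_left
      (evenPartsEvenMult_of_forall_odd (forall_mem_bind_pair.2 hodd)),
    evenPartsEvenMult_iff_of_forall_even
      (forall_mem_bind_pair.2 fun i hi => ⟨ha_even _ (by grind), ha_even _ (by grind)⟩)]
  refine forall_even_count_bind_pair_iff (fun i hi => ?_) (fun i hi j hj hij => ?_)
  · have := ha_mono (2 * i - 1) (by grind)
    rwa [Nat.sub_add_cancel (by grind)] at this
  · exact hmono (by grind) (by grind) (by grind)

/-- Lemma 4.2 of the paper, type C case: for even `a_{2q} ≥ ⋯ ≥ a_1 ≥ 2`, even `a_0` with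
`a_1 ≥ a_0 ≥ 0`, `I ⊆ {1,…,q}`, and positive integers `μ_u`, `ν_v`, the multiset
`M = {a_{2i}, a_{2i-1} : i ∈ I} ⊎ {a_{2j}+1, a_{2j-1}-1 : j ∉ I} ⊎ {a_0+1}
⊎ {μ_u, μ_u} ⊎ {ν_v, ν_v}`
has every even element occurring with even multiplicity — i.e. `M` is the partition of a
nilpotent orbit of `so(2n+1,ℂ)` where `2n+1` is the sum of its elements — if and only if
`a_{2i} = a_{2i-1}` for every `i ∈ I`. -/
theorem canonicalPreimage_typeC_partition_iff (q : ℕ) (a : ℕ → ℕ) (I : Finset ℕ)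
    (μ ν : List ℕ)
    (ha_even : ∀ i, i ≤ 2 * q → Even (a i))
    (ha_mono : ∀ i, i < 2 * q → a i ≤ a (i + 1))
    (ha_ge : ∀ i, 1 ≤ i → i ≤ 2 * q → 2 ≤ a i)
    (hI : I ⊆ Finset.Icc 1 q)
    (hμ : ∀ m ∈ μ, 0 < m) (hν : ∀ m ∈ ν, 0 < m)
    (M : Multiset ℕ)
    (hM : M = I.val.bind (fun i => ({a (2 * i), a (2 * i - 1)} : Multiset ℕ))
        + ((Finset.Icc 1 q) \ I).val.bind
            (fun j => ({a (2 * j) + 1, a (2 * j - 1) - 1} : Multiset ℕ))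
        + ({a 0 + 1} : Multiset ℕ)
        + 2 • (μ : Multiset ℕ) + 2 • (ν : Multiset ℕ)) :
    (∀ e ∈ M, Even e → Even (M.count e)) ↔ (∀ i ∈ I, a (2 * i) = a (2 * i - 1)) :=
  canonicalPreimage_typeC_partition_iff_general q a I μ ν ha_even ha_mono ha_ge hI M hM
end

section
/- Let λ be a special type C partition of 2n. Take the padded column list of λ (padded with zeros to odd length); repeatedly delete two equal adjacent entries occupying positions 2t+1 and 2t until no such pair remains; then repeatedly delete two equal adjacent entries of odd value occupying positions 2t and 2t−1 until no such pair remains. Then every entry of the resulting list is even. (This is the assertion, implicit in Propositions 2.4 and 3.2 of the paper, that the reduced column string a''_{2q} ≥ a''_{2q−1} ≥ ⋯ ≥ a''_0 of a special orbit of Sp(2n,ℂ), obtained after separating the ν column pairs and the odd μ column pairs, consists entirely of even numbers.) -/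
/-- `l` is a partition of `N`: a weakly decreasing list of positive integers with sum `N`. -/
def IsPartitionOf (N : ℕ) (l : List ℕ) : Prop :=
  l.Pairwise (· ≥ ·) ∧ (∀ x ∈ l, 0 < x) ∧ l.sum = N

/-- the `j`-th column length `c_j(λ) = #{i : λ_i ≥ j}`. -/
def colLen (l : List ℕ) (j : ℕ) : ℕ := l.countP (fun x => decide (j ≤ x))

/-- the transpose partition, as the list `c_1 ≥ c_2 ≥ ⋯ ≥ c_{λ_1}` of column lengths. -/
def transposeList (l : List ℕ) : List ℕ :=
  (List.range (l.foldr max 0)).map (fun j => colLen l (j + 1))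

/-- pad a list with one zero at the end if necessary so that its length is odd. -/
def padToOdd (c : List ℕ) : List ℕ := if Odd c.length then c else c ++ [0]

/-- Delete two equal adjacent entries occupying positions `2t+1` and `2t` for some `t ≥ 0`
(positions in a list of length `m` are numbered `m-1, …, 1, 0` from first to last). -/
def delStepE (L L' : List ℕ) : Prop :=
  ∃ (a : ℕ) (l₁ l₂ : List ℕ), Even l₂.length ∧ L = l₁ ++ a :: a :: l₂ ∧ L' = l₁ ++ l₂

/-- Delete two equal adjacent entries of odd value at positions `2t` and `2t-1`, `t ≥ 1`. -/
def delStepOOddVal (L L' : List ℕ) : Prop :=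
  ∃ (a : ℕ) (l₁ l₂ : List ℕ),
    Odd a ∧ Odd l₂.length ∧ L = l₁ ++ a :: a :: l₂ ∧ L' = l₁ ++ l₂

/-!
Both kinds of step delete an adjacent pair of equal entries, so every list that occurs is a
sublist of the padded column list: it is weakly decreasing and, by speciality, each odd value
occurs in it an even number of times. Once the first stage stops, every adjacent equal pair sits
at positions `2t` and `2t-1`, and in a weakly decreasing list deleting an adjacent equal pair
preserves this. So an odd value surviving to the end would occur at least twice, hence in an
adjacent pair at positions `2t` and `2t-1`, which the second stage could still delete.
-/

section

variable {α : Type*}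

def DelPairStep (L L' : List α) : Prop :=
  ∃ (a : α) (l₁ l₂ : List α), L = l₁ ++ a :: a :: l₂ ∧ L' = l₁ ++ l₂

theorem DelPairStep.sublist {L L' : List α} (h : DelPairStep L L') : L'.Sublist L := by
  obtain ⟨a, l₁, l₂, rfl, rfl⟩ := h
  simp

theorem DelPairStep.even_count_iff [BEq α] [LawfulBEq α] {L L' : List α} (h : DelPairStep L L')
    (v : α) : Even (L'.count v) ↔ Even (L.count v) := by
  obtain ⟨a, l₁, l₂, rfl, rfl⟩ := h
  simp only [List.count_append, List.count_cons]
  split <;> simp [parity_simps]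

theorem Relation.ReflTransGen.sublist_of_delPairStep {L M : List α}
    (h : Relation.ReflTransGen DelPairStep L M) : M.Sublist L := by
  induction h with
  | refl => exact List.Sublist.refl L
  | tail _ hstep ih => exact hstep.sublist.trans ih

theorem Relation.ReflTransGen.even_count_iff_of_delPairStep [BEq α] [LawfulBEq α]
    {L M : List α} (h : Relation.ReflTransGen DelPairStep L M) (v : α) :
    Even (M.count v) ↔ Even (L.count v) := by
  induction h with
  | refl => rfl
  | tail _ hstep ih => exact (hstep.even_count_iff v).trans ih

theorem List.Pairwise.exists_eq_append_cons_cons [PartialOrder α] [BEq α]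
    [LawfulBEq α] {L : List α} (hL : L.Pairwise (· ≥ ·)) {x : α} (hx : 2 ≤ L.count x) :
    ∃ l₁ l₂, L = l₁ ++ x :: x :: l₂ := by
  induction L with
  | nil => simp at hx
  | cons y ys ih =>
    rw [List.pairwise_cons] at hL
    by_cases hys : 2 ≤ ys.count x
    · obtain ⟨l₁, l₂, rfl⟩ := ih hL.2 hys
      exact ⟨y :: l₁, l₂, rfl⟩
    have hy : y = x := by
      by_contra hne
      rw [List.count_cons, beq_false_of_ne hne, if_neg Bool.false_ne_true] at hx
      exact hys hx
    subst hy
    have hmem : y ∈ ys := List.count_pos_iff.mp (by simp only [List.count_cons_self] at hx; omega)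
    obtain ⟨z, zs, rfl⟩ := List.exists_cons_of_ne_nil (List.ne_nil_of_mem hmem)
    have hzy : z ≥ y := by
      rcases List.mem_cons.mp hmem with rfl | hmem'
      · exact le_rfl
      · exact (List.pairwise_cons.mp hL.2).1 y hmem'
    obtain rfl : z = y := le_antisymm (hL.1 z List.mem_cons_self) hzy
    exact ⟨[], zs, rfl⟩

end

theorem delStepE.delPairStep {L L' : List ℕ} (h : delStepE L L') : DelPairStep L L' :=
  let ⟨a, l₁, l₂, _, hL, hL'⟩ := h
  ⟨a, l₁, l₂, hL, hL'⟩

theorem delStepOOddVal.delPairStep {L L' : List ℕ} (h : delStepOOddVal L L') :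
    DelPairStep L L' :=
  let ⟨a, l₁, l₂, _, _, hL, hL'⟩ := h
  ⟨a, l₁, l₂, hL, hL'⟩

theorem odd_length_of_not_delStepE {L : List ℕ} (hL : ∀ M, ¬ delStepE L M) {a : ℕ}
    {l₁ l₂ : List ℕ} (h : L = l₁ ++ a :: a :: l₂) : Odd l₂.length :=
  Nat.not_even_iff_odd.mp fun he => hL _ ⟨a, l₁, l₂, he, h, rfl⟩

theorem DelPairStep.not_delStepE {L L' : List ℕ} (hstep : DelPairStep L L')
    (hs : L.Pairwise (· ≥ ·)) (hL : ∀ M, ¬ delStepE L M) : ∀ M, ¬ delStepE L' M := by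
  rintro M ⟨b, p, q, hq, hL', rfl⟩
  obtain ⟨a, l₁, l₂, rfl, rfl⟩ := hstep
  rw [← Nat.not_odd_iff_even] at hq
  rcases List.append_eq_append_iff.mp hL' with ⟨r, rfl, rfl⟩ | ⟨r, rfl, hr⟩
  · exact hq (odd_length_of_not_delStepE hL (a := b) (l₁ := l₁ ++ a :: a :: r) (by simp))
  rcases r with _ | ⟨c, _ | ⟨d, r'⟩⟩
  · subst hr
    exact hq (odd_length_of_not_delStepE hL (a := b) (l₁ := p ++ [a, a]) (by simp))
  · -- a new pair `b b` straddling the deleted `a a` forces `b ≥ a ≥ b`, and `a a a a` contains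
    -- an adjacent pair at the forbidden parity
    obtain ⟨rfl, rfl⟩ := List.cons_eq_cons.mp hr
    have hs' : (b :: a :: a :: b :: q).Pairwise (· ≥ ·) := by
      simp only [List.append_assoc, List.cons_append, List.nil_append] at hs
      exact hs.sublist (List.sublist_append_right p _)
    obtain rfl : a = b := le_antisymm
      ((List.pairwise_cons.mp hs').1 a (by simp))
      ((List.pairwise_cons.mp (List.pairwise_cons.mp hs').2).1 b (by simp))
    have := odd_length_of_not_delStepE hL (a := a) (l₁ := p) (l₂ := a :: a :: q) (by simp)
    exact hq (by simpa [Nat.odd_add_one] using this)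
  · obtain ⟨rfl, rfl, rfl⟩ : b = c ∧ b = d ∧ q = r' ++ l₂ := by simpa using hr
    have := odd_length_of_not_delStepE hL (a := b) (l₁ := p) (l₂ := r' ++ a :: a :: l₂)
      (by simp)
    simp only [List.length_append, List.length_cons] at this hq
    exact hq (by simpa [Nat.odd_add_one, parity_simps] using this)

theorem Relation.ReflTransGen.not_delStepE_of_delPairStep {L M : List ℕ}
    (h : Relation.ReflTransGen DelPairStep L M) (hs : L.Pairwise (· ≥ ·))
    (hL : ∀ M', ¬ delStepE L M') : ∀ M', ¬ delStepE M M' := by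
  induction h with
  | refl => exact hL
  | tail hLb hstep ih => exact hstep.not_delStepE (hs.sublist hLb.sublist_of_delPairStep) ih

theorem exists_delStepOOddVal_of_odd_mem {M : List ℕ} (hs : M.Pairwise (· ≥ ·))
    (hcount : ∀ v, Odd v → Even (M.count v)) (hM : ∀ M', ¬ delStepE M M') {x : ℕ}
    (hx : x ∈ M) (hodd : Odd x) : ∃ M', delStepOOddVal M M' := by
  have h2 : 2 ≤ M.count x := by
    obtain ⟨k, hk⟩ := hcount x hodd
    have := List.count_pos_iff.mpr hx
    omega
  obtain ⟨l₁, l₂, rfl⟩ := hs.exists_eq_append_cons_cons h2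
  exact ⟨_, x, l₁, l₂, hodd, odd_length_of_not_delStepE hM rfl, rfl, rfl⟩

theorem transposeList_pairwise_ge (l : List ℕ) : (transposeList l).Pairwise (· ≥ ·) := by
  rw [transposeList, List.pairwise_map]
  refine List.pairwise_lt_range.imp fun hij => List.countP_mono_left fun x _ hx => ?_
  simp only [decide_eq_true_eq] at hx ⊢
  omega

theorem padToOdd_pairwise_ge {c : List ℕ} (hc : c.Pairwise (· ≥ ·)) :
    (padToOdd c).Pairwise (· ≥ ·) := by
  unfold padToOdd
  split
  · exact hc
  · simpa [List.pairwise_append] using hc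

theorem even_count_padToOdd {c : List ℕ} (hc : ∀ e ∈ c, Odd e → Even (c.count e)) {v : ℕ}
    (hv : Odd v) : Even ((padToOdd c).count v) := by
  have hv0 : v ≠ 0 := by rintro rfl; simp at hv
  have hcount : (padToOdd c).count v = c.count v := by
    unfold padToOdd
    split
    · rfl
    · simp [hv0.symm]
  rw [hcount]
  by_cases hmem : v ∈ c
  · exact hc v hmem hv
  · simp [List.count_eq_zero_of_not_mem hmem]

theorem typeC_reducedColumnString_even_general (l : List ℕ)
    (hspecial : ∀ e ∈ transposeList l, Odd e → Even ((transposeList l).count e)) :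
    ∀ M₁ M₂ : List ℕ,
      Relation.ReflTransGen delStepE (padToOdd (transposeList l)) M₁ →
      (∀ M', ¬ delStepE M₁ M') →
      Relation.ReflTransGen delStepOOddVal M₁ M₂ →
      (∀ M', ¬ delStepOOddVal M₂ M') →
      ∀ x ∈ M₂, Even x := by
  intro M₁ M₂ hE hstopE hO hstopO x hx
  have hsorted₀ := padToOdd_pairwise_ge (transposeList_pairwise_ge l)
  have hE' := Relation.ReflTransGen.mono (fun _ _ => delStepE.delPairStep) _ _ hE
  have hO' := Relation.ReflTransGen.mono (fun _ _ => delStepOOddVal.delPairStep) _ _ hO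
  have hsorted₁ := hsorted₀.sublist hE'.sublist_of_delPairStep
  have hsorted₂ := hsorted₁.sublist hO'.sublist_of_delPairStep
  have hcount₂ : ∀ v, Odd v → Even (M₂.count v) := fun v hv =>
    ((hE'.trans hO').even_count_iff_of_delPairStep v).mpr (even_count_padToOdd hspecial hv)
  have hstopE₂ := hO'.not_delStepE_of_delPairStep hsorted₁ hstopE
  by_contra hodd
  obtain ⟨M', hM'⟩ := exists_delStepOOddVal_of_odd_mem hsorted₂ hcount₂ hstopE₂ hx
    (Nat.not_even_iff_odd.mp hodd)
  exact hstopO M' hM'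

/-- Let `l` be a special type C partition of `2n`.  Take the padded column list of `l`
(padded with zeros to odd length); repeatedly delete two equal adjacent entries at
positions `2t+1` and `2t` until no such pair remains; then repeatedly delete two equal
adjacent entries of odd value at positions `2t` and `2t-1` until no such pair remains.
Then every entry of the resulting list is even. -/
theorem typeC_reducedColumnString_even (n : ℕ) (l : List ℕ)
    (hpart : IsPartitionOf (2 * n) l)
    (hC : ∀ e ∈ l, Odd e → Even (l.count e))
    (hspecial : ∀ e ∈ transposeList l, Odd e → Even ((transposeList l).count e)) :
    ∀ M₁ M₂ : List ℕ,
      Relation.ReflTransGen delStepE (padToOdd (transposeList l)) M₁ →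
      (∀ M', ¬ delStepE M₁ M') →
      Relation.ReflTransGen delStepOOddVal M₁ M₂ →
      (∀ M', ¬ delStepOOddVal M₂ M') →
      ∀ x ∈ M₂, Even x :=
  typeC_reducedColumnString_even_general l hspecial
end
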